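/- arXiv:1703.05989 — 4 statements merged into one kernel-verified Lean document; each statement's English description precedes it below -/
import Mathlib

section
/- For every λ > 0 and every real symmetric 2×2 matrix ξ one has G_λ(ξ) ≥ (1/2)·ρ⁰(ξ). -/
open Matrix Real

/-- First eigenvalue of a (symmetric) 2×2 real matrix. -/
noncomputable def eig1 (ξ : Matrix (Fin 2) (Fin 2) ℝ) : ℝ :=
  (ξ.trace + Real.sqrt (ξ.trace ^ 2 - 4 * ξ.det)) / 2

/-- Second eigenvalue of a (symmetric) 2×2 real matrix. -/
noncomputable def eig2 (ξ : Matrix (Fin 2) (Fin 2) ℝ) : ℝ :=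
  (ξ.trace - Real.sqrt (ξ.trace ^ 2 - 4 * ξ.det)) / 2

/-- ρ⁰(ξ) = |λ₁(ξ)| + |λ₂(ξ)|. -/
noncomputable def rho0 (ξ : Matrix (Fin 2) (Fin 2) ℝ) : ℝ :=
  |eig1 ξ| + |eig2 ξ|

/-- G_λ(ξ) = 2(ρ⁰(ξ) − λ^{-1/2}|det ξ|) if ρ⁰(ξ) ≤ √λ, and λ^{1/2} + λ^{-1/2}|ξ|² otherwise. -/
noncomputable def Glam (lam : ℝ) (ξ : Matrix (Fin 2) (Fin 2) ℝ) : ℝ :=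
  if rho0 ξ ≤ Real.sqrt lam then 2 * (rho0 ξ - |ξ.det| / Real.sqrt lam)
  else Real.sqrt lam + (∑ i, ∑ j, (ξ i j) ^ 2) / Real.sqrt lam

/-!
With λ₁λ₂ = det ξ and λ₁² + λ₂² = |ξ|², both branches of `Glam` reduce to AM-GM for |λ₁|, |λ₂|.
If ρ⁰ ≤ √λ, then |det ξ| ≤ (ρ⁰)²/4 ≤ ρ⁰√λ/4, so G_λ(ξ) ≥ 3ρ⁰/2. Otherwise
|ξ|² ≥ (ρ⁰)²/2 > ρ⁰√λ/2, so already the second summand of G_λ(ξ) exceeds ρ⁰/2.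
-/

section Eigenvalues

variable {ξ : Matrix (Fin 2) (Fin 2) ℝ}

lemma Matrix.IsSymm.trace_sq_sub_four_mul_det_nonneg (hξ : ξ.IsSymm) :
    0 ≤ ξ.trace ^ 2 - 4 * ξ.det := by
  rw [trace_fin_two, det_fin_two, hξ.apply 0 1]
  nlinarith [sq_nonneg (ξ 0 0 - ξ 1 1), sq_nonneg (ξ 0 1)]

lemma eig1_mul_eig2 (h : 0 ≤ ξ.trace ^ 2 - 4 * ξ.det) : eig1 ξ * eig2 ξ = ξ.det := by
  have hs := Real.sq_sqrt h
  unfold eig1 eig2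
  linear_combination (-1 / 4 : ℝ) * hs

lemma eig1_sq_add_eig2_sq (hξ : ξ.IsSymm) :
    eig1 ξ ^ 2 + eig2 ξ ^ 2 = ∑ i, ∑ j, ξ i j ^ 2 := by
  have hs := Real.sq_sqrt hξ.trace_sq_sub_four_mul_det_nonneg
  rw [trace_fin_two, det_fin_two, hξ.apply 0 1] at hs
  unfold eig1 eig2
  simp only [trace_fin_two, det_fin_two, Fin.sum_univ_two, hξ.apply 0 1]
  linear_combination (1 / 2 : ℝ) * hs

lemma rho0_nonneg : 0 ≤ rho0 ξ := by
  unfold rho0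
  positivity

lemma four_mul_abs_det_le_rho0_sq (h : 0 ≤ ξ.trace ^ 2 - 4 * ξ.det) :
    4 * |ξ.det| ≤ rho0 ξ ^ 2 := by
  rw [← eig1_mul_eig2 h, abs_mul, ← mul_assoc]
  exact four_mul_le_sq_add _ _

lemma rho0_sq_le_two_mul_sum_sq (hξ : ξ.IsSymm) : rho0 ξ ^ 2 ≤ 2 * ∑ i, ∑ j, ξ i j ^ 2 := by
  rw [← eig1_sq_add_eig2_sq hξ, ← sq_abs (eig1 ξ), ← sq_abs (eig2 ξ)]
  exact add_sq_le

end Eigenvalues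

/-- For every λ > 0 and every real symmetric 2×2 matrix ξ, G_λ(ξ) ≥ (1/2)ρ⁰(ξ). -/
theorem half_rho0_le_Glam (lam : ℝ) (hlam : 0 < lam)
    (ξ : Matrix (Fin 2) (Fin 2) ℝ) (hξ : ξ.IsSymm) :
    (1 / 2) * rho0 ξ ≤ Glam lam ξ := by
  have hq : 0 < √lam := Real.sqrt_pos.mpr hlam
  have hr : 0 ≤ rho0 ξ := rho0_nonneg
  unfold Glam
  split_ifs with h
  · have hdet : |ξ.det| / √lam ≤ rho0 ξ / 4 := by
      rw [div_le_div_iff₀ hq four_pos]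
      nlinarith [four_mul_abs_det_le_rho0_sq hξ.trace_sq_sub_four_mul_det_nonneg]
    linarith
  · have hsum : rho0 ξ / 2 ≤ (∑ i, ∑ j, ξ i j ^ 2) / √lam := by
      rw [div_le_div_iff₀ two_pos hq]
      nlinarith [rho0_sq_le_two_mul_sum_sq hξ]
    linarith
end

section
/- Let α, β ∈ ℝ, t ∈ [0,1], ε > 0, and let u_t : [0,1] → ℝ be defined by u_t(x) = (1/2)(tα + (1−t)β)x². Then there exist disjoint open sets I, J ⊂ (0,1) with closure(I) ∪ closure(J) = [0,1], Lebesgue measure |I| = t and |J| = 1 − t, and a continuously differentiable function u : [0,1] → ℝ with Lipschitz derivative, such that u(0) = u_t(0), u′(0) = u_t′(0), u(1) = u_t(1), u′(1) = u_t′(1), sup_{[0,1]}|u − u_t| + sup_{[0,1]}|u′ − u_t′| < ε, u is twice differentiable at every point of I with u″(x) = α for x ∈ I, and u is twice differentiable at every point of J with u″(x) = β for x ∈ J. -/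
/-!
Cut `[0,1]` into `N` equal cells and split each cell into a centred middle interval of relative
length `t` (making up `I`) and the two outer pieces (making up `J`). Add to `u_t'(x) = q x`,
`q = tα + (1-t)β`, the oscillation `(α-β)/N · φ(N x)`, where `φ` is the `1`-periodic antiderivative
of `𝟙_middle - t` vanishing at `0`. Then `u'` has slope `q + (α-β)(1-t) = α` on `I`,
`q - (α-β)t = β` on `J`, and `|u' - u_t'| ≤ |α-β|/N`. Because the middle interval is centred, `φ`
is odd, so `∫₀¹ φ(N s) ds = 0`; hence `u(x) = ∫₀ˣ u'` still ends at `u_t(1) = q/2`, and integrating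
the bound on `u' - u_t'` gives `|u - u_t| ≤ |α-β|/N`. Taking `N > 2|α-β|/ε` finishes.
-/

open Set MeasureTheory Filter Topology
open scoped NNReal ENNReal

def cellCopies (N : ℕ) (S : Set ℝ) : Set ℝ :=
  ⋃ k ∈ Finset.range N, (fun x => N * x - k) ⁻¹' S

section CellCopies

variable {N : ℕ} {S T : Set ℝ}

lemma mem_cellCopies {x : ℝ} : x ∈ cellCopies N S ↔ ∃ k < N, N * x - k ∈ S := by
  simp [cellCopies]

lemma eq_of_sub_natCast_mem_Ioo {y : ℝ} {k l : ℕ} (hk : y - k ∈ Ioo 0 1) (hl : y - l ∈ Ioo 0 1) :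
    k = l := by
  have hkl : (k : ℝ) < l + 1 := by linarith [hk.1, hl.2]
  have hlk : (l : ℝ) < k + 1 := by linarith [hk.2, hl.1]
  norm_cast at hkl hlk
  omega

lemma IsOpen.cellCopies (hS : IsOpen S) : IsOpen (cellCopies N S) :=
  isOpen_biUnion fun _ _ => hS.preimage (by fun_prop)

lemma cellCopies_subset_Ioo (hS : S ⊆ Ioo 0 1) : cellCopies N S ⊆ Ioo 0 1 := by
  intro x hx
  obtain ⟨k, hk, hkx⟩ := mem_cellCopies.1 hx
  have hkN : (k : ℝ) + 1 ≤ N := by exact_mod_cast hk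
  obtain ⟨h0, h1⟩ := hS hkx
  constructor <;> nlinarith [(k.cast_nonneg : (0 : ℝ) ≤ k)]

lemma Disjoint.cellCopies (hST : Disjoint S T) (hS : S ⊆ Ioo 0 1) (hT : T ⊆ Ioo 0 1) :
    Disjoint (cellCopies N S) (cellCopies N T) := by
  refine Set.disjoint_left.2 fun x hxS hxT => ?_
  obtain ⟨k, -, hk⟩ := mem_cellCopies.1 hxS
  obtain ⟨l, -, hl⟩ := mem_cellCopies.1 hxT
  obtain rfl := eq_of_sub_natCast_mem_Ioo (hS hk) (hT hl)
  exact Set.disjoint_left.1 hST hk hl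

lemma volume_cellCopies (hN : N ≠ 0) (hSm : MeasurableSet S) (hS : S ⊆ Ioo 0 1) :
    volume (cellCopies N S) = volume S := by
  have hpiece (k : ℕ) :
      volume ((fun x : ℝ => N * x - k) ⁻¹' S) = (N : ℝ≥0∞)⁻¹ * volume S := by
    have hpre : (fun x : ℝ => N * x - k) ⁻¹' S =
        (fun x : ℝ => N * x) ⁻¹' ((fun y => y + -(k : ℝ)) ⁻¹' S) := by
      ext; simp [sub_eq_add_neg]
    rw [hpre, Real.volume_preimage_mul_left (by positivity), measure_preimage_add_right, abs_inv,
      Nat.abs_cast, ENNReal.ofReal_inv_of_pos (by positivity), ENNReal.ofReal_natCast]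
  have hdisj : (Finset.range N : Set ℕ).PairwiseDisjoint fun k => (fun x : ℝ => N * x - k) ⁻¹' S :=
    fun _ _ _ _ hkl => Set.disjoint_left.2 fun _ hk hl =>
      hkl (eq_of_sub_natCast_mem_Ioo (hS hk) (hS hl))
  rw [cellCopies, measure_biUnion_finset hdisj fun k _ => hSm.preimage (by fun_prop),
    Finset.sum_congr rfl fun k _ => hpiece k, Finset.sum_const, Finset.card_range, nsmul_eq_mul,
    ← mul_assoc, ENNReal.mul_inv_cancel (by exact_mod_cast hN) (by simp), one_mul]

lemma closure_cellCopies (hN : N ≠ 0) : closure (cellCopies N S) = cellCopies N (closure S) := by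
  rw [cellCopies, Finset.closure_biUnion]
  refine iUnion₂_congr fun k _ => ?_
  exact (((Homeomorph.mulLeft₀ (N : ℝ) (by exact_mod_cast hN)).trans
    (Homeomorph.subRight (k : ℝ))).preimage_closure S).symm

lemma cellCopies_union : cellCopies N (S ∪ T) = cellCopies N S ∪ cellCopies N T := by
  ext x
  simp only [mem_cellCopies, mem_union]
  grind

lemma cellCopies_Icc (hN : N ≠ 0) : cellCopies N (Icc 0 1) = Icc 0 1 := by
  have hNpos : (0 : ℝ) < N := by positivity
  ext x
  rw [mem_cellCopies]
  constructor
  · rintro ⟨k, hk, h0, h1⟩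
    have hkN : (k : ℝ) + 1 ≤ N := by exact_mod_cast hk
    constructor <;> nlinarith [(k.cast_nonneg : (0 : ℝ) ≤ k)]
  · rintro ⟨h0, h1⟩
    rcases h1.lt_or_eq with h1 | rfl
    · have hNx : (0 : ℝ) ≤ N * x := by positivity
      refine ⟨⌊(N : ℝ) * x⌋₊, (Nat.floor_lt hNx).2 (by nlinarith), ?_, ?_⟩
      · linarith [Nat.floor_le hNx]
      · linarith [Nat.lt_floor_add_one ((N : ℝ) * x)]
    · exact ⟨N - 1, by omega, by rw [Nat.cast_sub (by omega)]; simp⟩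

lemma closure_cellCopies_union_closure_cellCopies (hN : N ≠ 0)
    (h : closure S ∪ closure T = Icc 0 1) :
    closure (cellCopies N S) ∪ closure (cellCopies N T) = Icc 0 1 := by
  rw [closure_cellCopies hN, closure_cellCopies hN, ← cellCopies_union, h, cellCopies_Icc hN]

end CellCopies

lemma closure_Ioo_union_closure_Ioo_union_Ioo {p r : ℝ} (hp : 0 ≤ p) (hpr : p ≤ r) (hr : r ≤ 1) :
    closure (Ioo p r) ∪ closure (Ioo 0 p ∪ Ioo r 1) = Icc 0 1 := by
  refine Subset.antisymm (union_subset (closure_minimal ?_ isClosed_Icc)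
    (closure_minimal ?_ isClosed_Icc)) ?_
  · exact Ioo_subset_Icc_self.trans (Icc_subset_Icc hp hr)
  · exact union_subset (Ioo_subset_Icc_self.trans (Icc_subset_Icc le_rfl (hpr.trans hr)))
      (Ioo_subset_Icc_self.trans (Icc_subset_Icc (hp.trans hpr) le_rfl))
  rintro x ⟨h0, h1⟩
  rw [closure_union]
  have hcl {l m : ℝ} (hlm : l < m) (hx : x ∈ Icc l m) : x ∈ closure (Ioo l m) := by
    rwa [closure_Ioo hlm.ne]
  rcases lt_or_ge x p with hxp | hpx
  · exact Or.inr (Or.inl (hcl (by linarith) ⟨h0, hxp.le⟩))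
  rcases lt_or_ge r x with hrx | hxr
  · exact Or.inr (Or.inr (hcl (by linarith) ⟨hrx.le, h1⟩))
  rcases hpr.lt_or_eq with hpr | rfl
  · exact Or.inl (hcl hpr ⟨hpx, hxr⟩)
  obtain rfl : x = p := le_antisymm hxr hpx
  rcases h1.lt_or_eq with h1 | rfl
  · exact Or.inr (Or.inr (hcl h1 ⟨le_rfl, h1.le⟩))
  · exact Or.inr (Or.inl (hcl one_pos ⟨h0, le_rfl⟩))

lemma volume_Ioo_union_Ioo {p r : ℝ} (hp : 0 ≤ p) (hpr : p ≤ r) (hr : r ≤ 1) :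
    volume (Ioo 0 p ∪ Ioo r 1) = ENNReal.ofReal (1 - (r - p)) := by
  have hdisj : Disjoint (Ioo 0 p) (Ioo r 1) :=
    Set.disjoint_left.2 fun _ h1 h2 => by linarith [h1.2, h2.1]
  rw [measure_union hdisj measurableSet_Ioo, Real.volume_Ioo, Real.volume_Ioo,
    ← ENNReal.ofReal_add (by linarith) (by linarith)]
  ring_nf

/-- Centred at `1/2`, so that `profile t` below is odd about `1/2` (`profile_one_sub`). -/
def middleLayer (t : ℝ) : Set ℝ := Ioo ((1 - t) / 2) ((1 - t) / 2 + t)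

def outerLayer (t : ℝ) : Set ℝ := Ioo 0 ((1 - t) / 2) ∪ Ioo ((1 - t) / 2 + t) 1

section Layers

variable {t : ℝ}

lemma middleLayer_subset_Ioo (ht : t ≤ 1) : middleLayer t ⊆ Ioo 0 1 :=
  Ioo_subset_Ioo (by linarith) (by linarith)

lemma outerLayer_subset_Ioo (ht : 0 ≤ t) : outerLayer t ⊆ Ioo 0 1 :=
  union_subset (Ioo_subset_Ioo le_rfl (by linarith)) (Ioo_subset_Ioo (by linarith) le_rfl)

lemma disjoint_middleLayer_outerLayer (t : ℝ) : Disjoint (middleLayer t) (outerLayer t) :=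
  Set.disjoint_left.2 fun _ hx hx' => by
    rcases hx' with h | h <;> linarith [hx.1, hx.2, h.1, h.2]

lemma cellCopies_middleLayer_outerLayer (ht : t ∈ Icc 0 1) {N : ℕ} (hN : N ≠ 0) :
    let I := cellCopies N (middleLayer t)
    let J := cellCopies N (outerLayer t)
    IsOpen I ∧ IsOpen J ∧ I ⊆ Ioo 0 1 ∧ J ⊆ Ioo 0 1 ∧ Disjoint I J ∧
      closure I ∪ closure J = Icc 0 1 ∧
      volume I = ENNReal.ofReal t ∧ volume J = ENNReal.ofReal (1 - t) := by
  obtain ⟨ht0, ht1⟩ := ht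
  have hI := middleLayer_subset_Ioo ht1
  have hJ := outerLayer_subset_Ioo ht0
  refine ⟨isOpen_Ioo.cellCopies, (isOpen_Ioo.union isOpen_Ioo).cellCopies,
    cellCopies_subset_Ioo hI, cellCopies_subset_Ioo hJ,
    (disjoint_middleLayer_outerLayer t).cellCopies hI hJ,
    closure_cellCopies_union_closure_cellCopies hN
      (closure_Ioo_union_closure_Ioo_union_Ioo (by linarith) (by linarith) (by linarith)), ?_, ?_⟩
  · rw [volume_cellCopies (S := middleLayer t) hN measurableSet_Ioo hI, middleLayer,
      Real.volume_Ioo, add_sub_cancel_left]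
  · rw [volume_cellCopies (S := outerLayer t) hN (measurableSet_Ioo.union measurableSet_Ioo) hJ,
      outerLayer, volume_Ioo_union_Ioo (by linarith) (by linarith) (by linarith),
      add_sub_cancel_left]

end Layers

section Fract

variable {g : ℝ → ℝ}

lemma LipschitzOnWith.comp_fract {K : ℝ≥0} (hg : LipschitzOnWith K g (Icc 0 1)) (h01 : g 0 = g 1) :
    LipschitzWith K fun y => g (Int.fract y) := by
  have hmem (z : ℝ) : Int.fract z ∈ Icc (0 : ℝ) 1 := ⟨Int.fract_nonneg z, (Int.fract_lt_one z).le⟩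
  refine LipschitzWith.of_dist_le_mul fun x y => ?_
  wlog hxy : x ≤ y generalizing x y
  · rw [dist_comm, dist_comm x]
    exact this y x (le_of_not_ge hxy)
  rcases (Int.floor_mono hxy).lt_or_eq with hlt | heq
  · -- across an integer, pass through `g 1 = g 0`
    have hfloor : (⌊x⌋ : ℝ) + 1 ≤ ⌊y⌋ := by exact_mod_cast hlt
    have hx1 := hg.dist_le_mul _ (hmem x) 1 ⟨zero_le_one, le_rfl⟩
    have hy0 := hg.dist_le_mul 0 ⟨le_rfl, zero_le_one⟩ _ (hmem y)
    rw [Real.dist_eq (Int.fract x), abs_of_nonpos (by linarith [(hmem x).2])] at hx1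
    rw [Real.dist_eq 0, abs_of_nonpos (by linarith [(hmem y).1])] at hy0
    calc dist (g (Int.fract x)) (g (Int.fract y))
        ≤ dist (g (Int.fract x)) (g 1) + dist (g 0) (g (Int.fract y)) :=
          h01 ▸ dist_triangle _ _ _
      _ ≤ K * (1 - Int.fract x + Int.fract y) := by linarith
      _ ≤ K * dist x y := by
          rw [Real.dist_eq, abs_of_nonpos (by linarith), Int.fract, Int.fract]
          gcongr
          linarith
  · calc dist (g (Int.fract x)) (g (Int.fract y)) ≤ K * dist (Int.fract x) (Int.fract y) :=
          hg.dist_le_mul _ (hmem x) _ (hmem y)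
      _ = K * dist x y := by
          rw [Real.dist_eq, Real.dist_eq, Int.fract, Int.fract, heq, sub_sub_sub_cancel_right]

lemma HasDerivAt.comp_fract {d y : ℝ} {k : ℤ} (hg : HasDerivAt g d (y - k))
    (hk : y - k ∈ Ioo 0 1) : HasDerivAt (fun z => g (Int.fract z)) d y := by
  have hfract : ∀ᶠ z in 𝓝 y, g (Int.fract z) = g (z - k) := by
    filter_upwards [(isOpen_Ioo.preimage (continuous_sub_right (k : ℝ))).mem_nhds hk] with z hz
    rw [Int.fract_eq_iff.2 ⟨hz.1.le, hz.2, k, by ring⟩]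
  exact (hg.comp_sub_const y k).congr_of_eventuallyEq hfract

lemma comp_fract_natCast_sub (hg : ∀ y, g (1 - y) = -g y) (h0 : g 0 = 0) (n : ℕ) (y : ℝ) :
    g (Int.fract (n - y)) = -g (Int.fract y) := by
  rw [sub_eq_neg_add, Int.fract_add_natCast]
  by_cases hy : Int.fract y = 0
  · rw [hy, Int.fract_neg_eq_zero.2 hy, h0, neg_zero]
  · rw [Int.fract_neg hy, hg]

end Fract

lemma hasDerivAt_of_eventually_eq_affine {f : ℝ → ℝ} {m b y : ℝ}
    (h : ∀ᶠ z in 𝓝 y, f z = m * z + b) : HasDerivAt f m y :=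
  ((((hasDerivAt_id' y).const_mul m).add_const b).congr_deriv (mul_one m)).congr_of_eventuallyEq h

/-- For `y ∈ [0,1]`, `profile t y = ∫₀ʸ (𝟙_{middleLayer t} - t)`. -/
noncomputable def profile (t y : ℝ) : ℝ := max 0 (min (y - (1 - t) / 2) t) - t * y

section Profile

variable {t : ℝ}

lemma profile_zero (ht : t ≤ 1) : profile t 0 = 0 := by
  simp only [profile, mul_zero, sub_zero]
  exact max_eq_left (min_le_left _ _ |>.trans (by linarith))

lemma profile_one_sub (ht : 0 ≤ t) (y : ℝ) : profile t (1 - y) = -profile t y := by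
  simp only [profile, max_def, min_def]
  split_ifs <;> linarith

lemma lipschitzWith_profile (t : ℝ) : LipschitzWith (1 + ‖t‖₊) (profile t) := by
  have h := ((LipschitzWith.id.sub (LipschitzWith.const ((1 - t) / 2))).min_const t
    |>.const_max 0).sub (lipschitzWith_smul t)
  rwa [add_zero] at h

lemma abs_profile_le (ht : t ∈ Icc 0 1) {y : ℝ} (hy : y ∈ Icc 0 1) : |profile t y| ≤ 1 := by
  obtain ⟨ht0, ht1⟩ := ht
  obtain ⟨hy0, hy1⟩ := hy
  have hty : 0 ≤ t * y := mul_nonneg ht0 hy0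
  have hty' : t * y ≤ t := mul_le_of_le_one_right ht0 hy1
  simp only [profile, max_def, min_def]
  split_ifs <;> rw [abs_le] <;> constructor <;> linarith

lemma hasDerivAt_profile_of_mem_middleLayer {y : ℝ} (hy : y ∈ middleLayer t) :
    HasDerivAt (profile t) (1 - t) y :=
  hasDerivAt_of_eventually_eq_affine (b := -((1 - t) / 2)) <|
    eventually_of_mem (isOpen_Ioo.mem_nhds hy) fun z hz => by
      rw [profile, min_eq_left (by linarith [hz.2]), max_eq_right (by linarith [hz.1])]
      ring

lemma hasDerivAt_profile_of_mem_outerLayer (ht : 0 ≤ t) {y : ℝ} (hy : y ∈ outerLayer t) :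
    HasDerivAt (profile t) (-t) y := by
  rcases hy with hy | hy
  · refine hasDerivAt_of_eventually_eq_affine (b := 0) <|
      eventually_of_mem (Iio_mem_nhds hy.2) fun z hz => ?_
    rw [profile, max_eq_left (min_le_left _ _ |>.trans (by linarith [show z < _ from hz]))]
    ring
  · refine hasDerivAt_of_eventually_eq_affine (b := t) <|
      eventually_of_mem (Ioi_mem_nhds hy.1) fun z hz => ?_
    rw [profile, min_eq_right (by linarith [show _ < z from hz]), max_eq_right ht]
    ring

end Profile

noncomputable def sawtooth (t y : ℝ) : ℝ := profile t (Int.fract y)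

section Sawtooth

variable {t : ℝ}

lemma lipschitzWith_sawtooth (ht : t ∈ Icc 0 1) : LipschitzWith (1 + ‖t‖₊) (sawtooth t) :=
  (lipschitzWith_profile t).lipschitzOnWith.comp_fract <| by
    rw [profile_zero ht.2, ← sub_zero 1, profile_one_sub ht.1, profile_zero ht.2, neg_zero]

lemma abs_sawtooth_le (ht : t ∈ Icc 0 1) (y : ℝ) : |sawtooth t y| ≤ 1 :=
  abs_profile_le ht ⟨Int.fract_nonneg y, (Int.fract_lt_one y).le⟩

lemma sawtooth_natCast (ht : t ≤ 1) (n : ℕ) : sawtooth t n = 0 := by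
  rw [sawtooth, Int.fract_natCast, profile_zero ht]

lemma sawtooth_natCast_sub (ht : t ∈ Icc 0 1) (n : ℕ) (y : ℝ) :
    sawtooth t (n - y) = -sawtooth t y :=
  comp_fract_natCast_sub (profile_one_sub ht.1) (profile_zero ht.2) n y

lemma hasDerivAt_sawtooth_of_sub_mem_middleLayer (ht : t ≤ 1) (y : ℝ) (k : ℕ)
    (hy : y - k ∈ middleLayer t) : HasDerivAt (sawtooth t) (1 - t) y :=
  HasDerivAt.comp_fract (k := k) (by simpa using hasDerivAt_profile_of_mem_middleLayer hy)
    (by simpa using middleLayer_subset_Ioo ht hy)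

lemma hasDerivAt_sawtooth_of_sub_mem_outerLayer (ht : 0 ≤ t) (y : ℝ) (k : ℕ)
    (hy : y - k ∈ outerLayer t) : HasDerivAt (sawtooth t) (-t) y :=
  HasDerivAt.comp_fract (k := k) (by simpa using hasDerivAt_profile_of_mem_outerLayer ht hy)
    (by simpa using outerLayer_subset_Ioo ht hy)

end Sawtooth

lemma integral_eq_zero_of_reflect_eq_neg {f : ℝ → ℝ} {a b : ℝ}
    (hf : ∀ x, f (a + b - x) = -f x) : ∫ x in a..b, f x = 0 := by
  have h := intervalIntegral.integral_comp_sub_left f (a := a) (b := b) (a + b)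
  simp only [hf, intervalIntegral.integral_neg, add_sub_cancel_right, add_sub_cancel_left] at h
  linarith

noncomputable def perturbedSlope (q γ : ℝ) (N : ℕ) (φ : ℝ → ℝ) (x : ℝ) : ℝ :=
  q * x + γ / N * φ (N * x)

section PerturbedSlope

variable (q γ : ℝ) (N : ℕ) {φ : ℝ → ℝ}

lemma lipschitzWith_perturbedSlope {K : ℝ≥0} (hφ : LipschitzWith K φ) :
    LipschitzWith (‖q‖₊ + ‖γ / N‖₊ * (K * ‖(N : ℝ)‖₊)) (perturbedSlope q γ N φ) :=
  (lipschitzWith_smul q).add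
    ((lipschitzWith_smul (γ / N)).comp (hφ.comp (lipschitzWith_smul (N : ℝ))))

lemma abs_perturbedSlope_sub_le (hφ : ∀ y, |φ y| ≤ 1) (x : ℝ) :
    |perturbedSlope q γ N φ x - q * x| ≤ |γ| / N := by
  rw [perturbedSlope, add_sub_cancel_left, abs_mul, abs_div, Nat.abs_cast]
  exact mul_le_of_le_one_right (by positivity) (hφ _)

lemma abs_integral_perturbedSlope_sub_le (hc : Continuous φ) (hφ : ∀ y, |φ y| ≤ 1) {x : ℝ}
    (hx : x ∈ Icc 0 1) : |(∫ s in 0..x, perturbedSlope q γ N φ s) - q * x ^ 2 / 2| ≤ |γ| / N := by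
  have hcont : Continuous (perturbedSlope q γ N φ) := by unfold perturbedSlope; fun_prop
  have hq : ∫ s in 0..x, q * s = q * x ^ 2 / 2 := by
    rw [intervalIntegral.integral_const_mul, integral_id]; ring
  rw [← hq, ← intervalIntegral.integral_sub (hcont.intervalIntegrable _ _)
    ((by fun_prop : Continuous fun s => q * s).intervalIntegrable _ _)]
  calc |∫ s in 0..x, perturbedSlope q γ N φ s - q * s|
      ≤ |γ| / N * |x - 0| :=
        intervalIntegral.norm_integral_le_of_norm_le_const
          (f := fun s => perturbedSlope q γ N φ s - q * s) fun s _ =>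
            abs_perturbedSlope_sub_le q γ N hφ s
    _ ≤ |γ| / N := by
        rw [sub_zero, abs_of_nonneg hx.1]
        exact mul_le_of_le_one_right (by positivity) hx.2

lemma integral_perturbedSlope_zero_one (hc : Continuous φ) (hodd : ∀ y, φ (N - y) = -φ y) :
    ∫ s in 0..1, perturbedSlope q γ N φ s = q / 2 := by
  have hosc : ∫ s in (0 : ℝ)..1, φ (N * s) = 0 :=
    integral_eq_zero_of_reflect_eq_neg fun s => by
      rw [zero_add, mul_one_sub, hodd]
  simp only [perturbedSlope]
  rw [intervalIntegral.integral_add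
    ((by fun_prop : Continuous fun s => q * s).intervalIntegrable _ _)
    ((by fun_prop : Continuous fun s => γ / N * φ (N * s)).intervalIntegrable _ _),
    intervalIntegral.integral_const_mul, intervalIntegral.integral_const_mul, integral_id, hosc]
  ring

lemma hasDerivAt_perturbedSlope (hN : N ≠ 0) {d x : ℝ} (hφ : HasDerivAt φ d (N * x)) :
    HasDerivAt (perturbedSlope q γ N φ) (q + γ * d) x := by
  have h := ((hasDerivAt_id' x).const_mul q).add
    ((hφ.comp x ((hasDerivAt_id' x).const_mul (N : ℝ))).const_mul (γ / N))
  refine h.congr_deriv ?_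
  field_simp

lemma hasDerivAt_perturbedSlope_of_mem_cellCopies (hN : N ≠ 0) {S : Set ℝ} {d : ℝ}
    (hφ : ∀ (y : ℝ) (k : ℕ), y - k ∈ S → HasDerivAt φ d y) {x : ℝ} (hx : x ∈ cellCopies N S) :
    HasDerivAt (perturbedSlope q γ N φ) (q + γ * d) x := by
  obtain ⟨k, -, hk⟩ := mem_cellCopies.1 hx
  exact hasDerivAt_perturbedSlope q γ N hN (hφ _ k hk)

end PerturbedSlope

lemma exists_nat_ne_zero_div_lt (c : ℝ) {ε : ℝ} (hε : 0 < ε) : ∃ N : ℕ, N ≠ 0 ∧ c / N < ε := by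
  obtain ⟨n, hn⟩ := exists_nat_gt (c / ε)
  refine ⟨n + 1, n.succ_ne_zero, ?_⟩
  rw [div_lt_iff₀ hε] at hn
  rw [div_lt_iff₀ (by positivity)]
  push_cast
  linarith

/-- One-dimensional lamination construction: given α, β, t ∈ [0,1] and ε > 0, there exist
disjoint open sets I, J ⊂ (0,1) with |I| = t, |J| = 1−t, closure(I) ∪ closure(J) = [0,1],
and a C¹ function u on [0,1] with Lipschitz derivative u′, matching the quadratic
u_t(x) = ½(tα+(1−t)β)x² and its derivative at 0 and 1, uniformly ε-close to u_t in C¹,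
with u″ = α on I and u″ = β on J. -/
theorem one_dim_lamination (α β t ε : ℝ) (ht : t ∈ Set.Icc (0 : ℝ) 1) (hε : 0 < ε) :
    ∃ (I J : Set ℝ) (u u' : ℝ → ℝ) (K : NNReal) (δ₁ δ₂ : ℝ),
      IsOpen I ∧ IsOpen J ∧ I ⊆ Set.Ioo 0 1 ∧ J ⊆ Set.Ioo 0 1 ∧ Disjoint I J ∧
      closure I ∪ closure J = Set.Icc 0 1 ∧
      volume I = ENNReal.ofReal t ∧
      volume J = ENNReal.ofReal (1 - t) ∧
      (∀ x ∈ Set.Icc (0 : ℝ) 1, HasDerivWithinAt u (u' x) (Set.Icc 0 1) x) ∧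
      ContinuousOn u' (Set.Icc 0 1) ∧
      LipschitzOnWith K u' (Set.Icc 0 1) ∧
      u 0 = (1 / 2) * (t * α + (1 - t) * β) * (0 : ℝ) ^ 2 ∧
      u' 0 = (t * α + (1 - t) * β) * 0 ∧
      u 1 = (1 / 2) * (t * α + (1 - t) * β) * (1 : ℝ) ^ 2 ∧
      u' 1 = (t * α + (1 - t) * β) * 1 ∧
      (∀ x ∈ Set.Icc (0 : ℝ) 1, |u x - (1 / 2) * (t * α + (1 - t) * β) * x ^ 2| ≤ δ₁) ∧
      (∀ x ∈ Set.Icc (0 : ℝ) 1, |u' x - (t * α + (1 - t) * β) * x| ≤ δ₂) ∧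
      δ₁ + δ₂ < ε ∧
      (∀ x ∈ I, HasDerivAt u' α x) ∧
      (∀ x ∈ J, HasDerivAt u' β x) := by
  obtain ⟨N, hN, hδ⟩ := exists_nat_ne_zero_div_lt (2 * |α - β|) hε
  obtain ⟨hIo, hJo, hI, hJ, hIJ, hcl, hvI, hvJ⟩ := cellCopies_middleLayer_outerLayer ht hN
  have hlip := lipschitzWith_perturbedSlope (t * α + (1 - t) * β) (α - β) N
    (lipschitzWith_sawtooth ht)
  have hc := (lipschitzWith_sawtooth ht).continuous
  refine ⟨_, _, fun x => ∫ s in 0..x, perturbedSlope (t * α + (1 - t) * β) (α - β) N (sawtooth t) s,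
    perturbedSlope (t * α + (1 - t) * β) (α - β) N (sawtooth t), _, |α - β| / N, |α - β| / N,
    hIo, hJo, hI, hJ, hIJ, hcl, hvI, hvJ,
    fun x _ => (hlip.continuous.integral_hasStrictDerivAt 0 x).hasDerivAt.hasDerivWithinAt,
    hlip.continuous.continuousOn, hlip.lipschitzOnWith, by simp,
    by simp [perturbedSlope, sawtooth, profile_zero ht.2], ?_,
    by simp only [perturbedSlope, mul_one, sawtooth_natCast ht.2, mul_zero, add_zero],
    fun x hx => ?_, fun x _ => abs_perturbedSlope_sub_le _ _ _ (abs_sawtooth_le ht) x,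
    by rwa [← add_div, ← two_mul],
    fun x hx => (hasDerivAt_perturbedSlope_of_mem_cellCopies _ _ _ hN
      (hasDerivAt_sawtooth_of_sub_mem_middleLayer ht.2) hx).congr_deriv (by ring),
    fun x hx => (hasDerivAt_perturbedSlope_of_mem_cellCopies _ _ _ hN
      (hasDerivAt_sawtooth_of_sub_mem_outerLayer ht.1) hx).congr_deriv (by ring)⟩
  · beta_reduce
    rw [integral_perturbedSlope_zero_one _ _ _ hc (sawtooth_natCast_sub ht N)]
    ring
  · convert abs_integral_perturbedSlope_sub_le _ _ _ hc (abs_sawtooth_le ht) hx using 3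
    ring
end

section
/- Let n ∈ ℕ and let f : Symₙ(ℝ) → ℝ be such that there exists a symmetric rank one convex function g : Symₙ(ℝ) → ℝ with g ≤ f pointwise. Then the symmetric rank one convex envelope of f is obtained by iterated lamination: R^sym f(ξ) = inf_{k ∈ ℕ} R^sym_k f(ξ) for every symmetric n×n matrix ξ. -/
open Matrix Set

/-- A function on symmetric n×n matrices is symmetric rank one convex if it is convex
along symmetric rank-one segments. -/
def SymRankOneConvex (n : ℕ) (h : Matrix (Fin n) (Fin n) ℝ → ℝ) : Prop :=
  ∀ ξ₁ ξ₂ : Matrix (Fin n) (Fin n) ℝ, ξ₁.IsSymm → ξ₂.IsSymm →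
    (∃ (α : ℝ) (η : Fin n → ℝ), ξ₁ - ξ₂ = α • Matrix.vecMulVec η η) →
    ∀ t ∈ Set.Icc (0 : ℝ) 1,
      h (t • ξ₁ + (1 - t) • ξ₂) ≤ t * h ξ₁ + (1 - t) * h ξ₂

/-- Iterated lamination: `R^sym₀ f = f` and `R^sym_{k+1} f(ξ)` is the infimum of
`t R^sym_k f(ξ₁) + (1−t) R^sym_k f(ξ₂)` over symmetric rank-one decompositions of ξ. -/
noncomputable def RsymIter (n : ℕ) (f : Matrix (Fin n) (Fin n) ℝ → ℝ) :
    ℕ → Matrix (Fin n) (Fin n) ℝ → ℝ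
  | 0 => f
  | k + 1 => fun ξ =>
      sInf { v : ℝ | ∃ (t : ℝ) (ξ₁ ξ₂ : Matrix (Fin n) (Fin n) ℝ),
        t ∈ Set.Icc (0 : ℝ) 1 ∧ ξ₁.IsSymm ∧ ξ₂.IsSymm ∧
        t • ξ₁ + (1 - t) • ξ₂ = ξ ∧
        (∃ (α : ℝ) (η : Fin n → ℝ), ξ₁ - ξ₂ = α • Matrix.vecMulVec η η) ∧
        v = t * RsymIter n f k ξ₁ + (1 - t) * RsymIter n f k ξ₂ }

/-- The symmetric rank one convex envelope: the pointwise supremum of all symmetric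
rank one convex functions lying below f on the symmetric matrices. -/
noncomputable def RsymEnv (n : ℕ) (f : Matrix (Fin n) (Fin n) ℝ → ℝ)
    (ξ : Matrix (Fin n) (Fin n) ℝ) : ℝ :=
  sSup { v : ℝ | ∃ g : Matrix (Fin n) (Fin n) ℝ → ℝ,
    SymRankOneConvex n g ∧ (∀ ζ : Matrix (Fin n) (Fin n) ℝ, ζ.IsSymm → g ζ ≤ f ζ) ∧
    v = g ξ }

/-! Every symmetric rank one convex minorant `g` of `f` stays below every lamination iterate
`R^sym_k f`, and these iterates decrease in `k`; so their pointwise limit `F` is bounded below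
by every such `g`. Passing to the limit in
`R^sym_{k+1} f(ζ) ≤ t R^sym_k f(ξ₁) + (1 − t) R^sym_k f(ξ₂)` shows that `F` is itself symmetric
rank one convex, hence `F` is the largest such minorant. -/

section Lamination

variable {n : ℕ} {f g : Matrix (Fin n) (Fin n) ℝ → ℝ}

def laminationValues (n : ℕ) (f : Matrix (Fin n) (Fin n) ℝ → ℝ) (k : ℕ)
    (ξ : Matrix (Fin n) (Fin n) ℝ) : Set ℝ :=
  { v : ℝ | ∃ (t : ℝ) (ξ₁ ξ₂ : Matrix (Fin n) (Fin n) ℝ),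
        t ∈ Set.Icc (0 : ℝ) 1 ∧ ξ₁.IsSymm ∧ ξ₂.IsSymm ∧
        t • ξ₁ + (1 - t) • ξ₂ = ξ ∧
        (∃ (α : ℝ) (η : Fin n → ℝ), ξ₁ - ξ₂ = α • Matrix.vecMulVec η η) ∧
        v = t * RsymIter n f k ξ₁ + (1 - t) * RsymIter n f k ξ₂ }

theorem RsymIter_succ (k : ℕ) (ξ : Matrix (Fin n) (Fin n) ℝ) :
    RsymIter n f (k + 1) ξ = sInf (laminationValues n f k ξ) := rfl

theorem RsymIter_mem_laminationValues (k : ℕ) {ξ : Matrix (Fin n) (Fin n) ℝ} (hξ : ξ.IsSymm) :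
    RsymIter n f k ξ ∈ laminationValues n f k ξ :=
  ⟨1, ξ, ξ, ⟨zero_le_one, le_rfl⟩, hξ, hξ, by simp, ⟨0, 0, by simp⟩, by ring⟩

theorem SymRankOneConvex.mem_lowerBounds_laminationValues (hg : SymRankOneConvex n g) {k : ℕ}
    (hgk : ∀ ζ : Matrix (Fin n) (Fin n) ℝ, ζ.IsSymm → g ζ ≤ RsymIter n f k ζ)
    (ξ : Matrix (Fin n) (Fin n) ℝ) : g ξ ∈ lowerBounds (laminationValues n f k ξ) := by
  rintro v ⟨t, ξ₁, ξ₂, ⟨ht₀, ht₁⟩, h₁, h₂, rfl, hrank, rfl⟩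
  calc g (t • ξ₁ + (1 - t) • ξ₂) ≤ t * g ξ₁ + (1 - t) * g ξ₂ := hg ξ₁ ξ₂ h₁ h₂ hrank t ⟨ht₀, ht₁⟩
    _ ≤ t * RsymIter n f k ξ₁ + (1 - t) * RsymIter n f k ξ₂ := by
      have : 0 ≤ 1 - t := by linarith
      gcongr
      exacts [hgk ξ₁ h₁, hgk ξ₂ h₂]

variable (hg : SymRankOneConvex n g) (hgf : ∀ ζ : Matrix (Fin n) (Fin n) ℝ, ζ.IsSymm → g ζ ≤ f ζ)
include hg hgf

theorem SymRankOneConvex.le_RsymIter (k : ℕ) :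
    ∀ ζ : Matrix (Fin n) (Fin n) ℝ, ζ.IsSymm → g ζ ≤ RsymIter n f k ζ := by
  induction k with
  | zero => exact hgf
  | succ k ih =>
    intro ζ hζ
    rw [RsymIter_succ]
    exact le_csInf ⟨_, RsymIter_mem_laminationValues k hζ⟩
      (hg.mem_lowerBounds_laminationValues ih ζ)

theorem RsymIter_succ_le_of_mem {k : ℕ} {ζ : Matrix (Fin n) (Fin n) ℝ} {v : ℝ}
    (hv : v ∈ laminationValues n f k ζ) : RsymIter n f (k + 1) ζ ≤ v := by
  rw [RsymIter_succ]
  exact csInf_le ⟨g ζ, hg.mem_lowerBounds_laminationValues (hg.le_RsymIter hgf k) ζ⟩ hv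

theorem antitone_RsymIter {ζ : Matrix (Fin n) (Fin n) ℝ} (hζ : ζ.IsSymm) :
    Antitone fun k => RsymIter n f k ζ :=
  antitone_nat_of_succ_le fun k =>
    RsymIter_succ_le_of_mem hg hgf (RsymIter_mem_laminationValues k hζ)

theorem bddBelow_range_RsymIter {ζ : Matrix (Fin n) (Fin n) ℝ} (hζ : ζ.IsSymm) :
    BddBelow (Set.range fun k => RsymIter n f k ζ) :=
  ⟨g ζ, by rintro _ ⟨k, rfl⟩; exact hg.le_RsymIter hgf k ζ hζ⟩

theorem tendsto_RsymIter_iInf {ζ : Matrix (Fin n) (Fin n) ℝ} (hζ : ζ.IsSymm) :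
    Filter.Tendsto (fun k => RsymIter n f k ζ) Filter.atTop (nhds (⨅ k, RsymIter n f k ζ)) :=
  tendsto_atTop_ciInf (antitone_RsymIter hg hgf hζ) (bddBelow_range_RsymIter hg hgf hζ)

theorem symRankOneConvex_iInf_RsymIter :
    SymRankOneConvex n fun ζ => ⨅ k, RsymIter n f k ζ := by
  intro ξ₁ ξ₂ h₁ h₂ hrank t ht
  have hζ : (t • ξ₁ + (1 - t) • ξ₂).IsSymm := (h₁.smul t).add (h₂.smul (1 - t))
  have hlim := ((tendsto_RsymIter_iInf hg hgf h₁).const_mul t).add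
    ((tendsto_RsymIter_iInf hg hgf h₂).const_mul (1 - t))
  refine ge_of_tendsto' hlim fun k => ?_
  calc ⨅ k, RsymIter n f k (t • ξ₁ + (1 - t) • ξ₂)
      ≤ RsymIter n f (k + 1) (t • ξ₁ + (1 - t) • ξ₂) :=
        ciInf_le (bddBelow_range_RsymIter hg hgf hζ) (k + 1)
    _ ≤ t * RsymIter n f k ξ₁ + (1 - t) * RsymIter n f k ξ₂ :=
        RsymIter_succ_le_of_mem hg hgf ⟨t, ξ₁, ξ₂, ht, h₁, h₂, rfl, hrank, rfl⟩

end Lamination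

/-- If some symmetric rank one convex function lies below f, then the symmetric rank one
convex envelope of f is obtained by iterated lamination:
R^sym f(ξ) = inf_k R^sym_k f(ξ) for every symmetric ξ. -/
theorem RsymEnv_eq_iInf_RsymIter (n : ℕ)
    (f : Matrix (Fin n) (Fin n) ℝ → ℝ)
    (hex : ∃ g : Matrix (Fin n) (Fin n) ℝ → ℝ, SymRankOneConvex n g ∧
      ∀ ζ : Matrix (Fin n) (Fin n) ℝ, ζ.IsSymm → g ζ ≤ f ζ)
    (ξ : Matrix (Fin n) (Fin n) ℝ) (hξ : ξ.IsSymm) :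
    RsymEnv n f ξ = ⨅ k : ℕ, RsymIter n f k ξ := by
  obtain ⟨g, hg, hgf⟩ := hex
  set candidates := { v : ℝ | ∃ g : Matrix (Fin n) (Fin n) ℝ → ℝ,
    SymRankOneConvex n g ∧ (∀ ζ : Matrix (Fin n) (Fin n) ℝ, ζ.IsSymm → g ζ ≤ f ζ) ∧ v = g ξ }
  have hmem : ⨅ k, RsymIter n f k ξ ∈ candidates :=
    ⟨_, symRankOneConvex_iInf_RsymIter hg hgf,
      fun ζ hζ => ciInf_le (bddBelow_range_RsymIter hg hgf hζ) 0, rfl⟩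
  have hub : ⨅ k, RsymIter n f k ξ ∈ upperBounds candidates := by
    rintro _ ⟨g', hg', hg'f, rfl⟩
    exact le_ciInf fun k => hg'.le_RsymIter hg'f k ξ hξ
  exact IsGreatest.csSup_eq ⟨hmem, hub⟩
end

section
/- For every λ > 0 and every real symmetric 2×2 matrix ξ one has R^sym F_λ(ξ) ≤ Ḡ_λ(ξ), where Ḡ_λ(ξ) = 2√λ·ρ⁰(ξ) − 2|det ξ| if ρ⁰(ξ) ≤ √λ and Ḡ_λ(ξ) = |ξ|² + λ otherwise. -/
open Matrix Set Real

/-- F_λ(0) = 0 and F_λ(ξ) = λ + |ξ|² for ξ ≠ 0, with |ξ| the Frobenius norm. -/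
noncomputable def Flam (lam : ℝ) (ξ : Matrix (Fin 2) (Fin 2) ℝ) : ℝ :=
  if ξ = 0 then 0 else lam + ∑ i, ∑ j, (ξ i j) ^ 2

/-- Ḡ_λ(ξ) = 2√λ ρ⁰(ξ) − 2|det ξ| if ρ⁰(ξ) ≤ √λ, and |ξ|² + λ otherwise. -/
noncomputable def Gbar (lam : ℝ) (ξ : Matrix (Fin 2) (Fin 2) ℝ) : ℝ :=
  if rho0 ξ ≤ Real.sqrt lam then 2 * Real.sqrt lam * rho0 ξ - 2 * |ξ.det|
  else (∑ i, ∑ j, (ξ i j) ^ 2) + lam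

/- ## auxiliary lemmas -/

lemma isSymm_vmv (w : Fin 2 → ℝ) : (Matrix.vecMulVec w w).IsSymm := by
  unfold Matrix.IsSymm; ext i j; simp [vecMulVec_apply, mul_comm]

lemma frob_comb (u v : Fin 2 → ℝ) (hu : u 0 ^ 2 + u 1 ^ 2 = 1) (hv : v 0 ^ 2 + v 1 ^ 2 = 1)
    (huv : u 0 * v 0 + u 1 * v 1 = 0) (x y : ℝ) :
    ∑ i, ∑ j, ((x • Matrix.vecMulVec u u + y • Matrix.vecMulVec v v) i j) ^ 2 = x ^ 2 + y ^ 2 := by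
  simp only [Fin.sum_univ_two, Matrix.add_apply, Matrix.smul_apply, vecMulVec_apply, smul_eq_mul]
  linear_combination (x ^ 2 * (u 0 ^ 2 + u 1 ^ 2 + 1)) * hu + (y ^ 2 * (v 0 ^ 2 + v 1 ^ 2 + 1)) * hv
    + (2 * x * y * (u 0 * v 0 + u 1 * v 1)) * huv

lemma Flam_le (lam : ℝ) (hlam : 0 < lam) (ζ : Matrix (Fin 2) (Fin 2) ℝ) :
    Flam lam ζ ≤ lam + ∑ i, ∑ j, (ζ i j) ^ 2 := by
  unfold Flam
  split
  · positivity
  · exact le_refl _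

section key
variable {lam : ℝ} (hlam : 0 < lam) {g : Matrix (Fin 2) (Fin 2) ℝ → ℝ}
  (hg : SymRankOneConvex 2 g)
  (hgF : ∀ ζ : Matrix (Fin 2) (Fin 2) ℝ, ζ.IsSymm → g ζ ≤ Flam lam ζ)
  {u v : Fin 2 → ℝ} (hu : u 0 ^ 2 + u 1 ^ 2 = 1) (hv : v 0 ^ 2 + v 1 ^ 2 = 1)
  (huv : u 0 * v 0 + u 1 * v 1 = 0)

include hlam hg hgF hu hv huv

lemma step2 (y : ℝ) (hy : |y| ≤ Real.sqrt lam) :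
    g (y • Matrix.vecMulVec v v) ≤ 2 * Real.sqrt lam * |y| := by
  set s := Real.sqrt lam with hs
  have hs0 : 0 < s := Real.sqrt_pos.mpr hlam
  have hs2 : s ^ 2 = lam := Real.sq_sqrt hlam.le
  set σ : ℝ := if 0 ≤ y then 1 else -1 with hσ
  have hσy : σ * |y| = y := by
    rcases le_or_gt 0 y with h | h
    · simp [hσ, if_pos h, abs_of_nonneg h]
    · simp [hσ, if_neg (not_le.mpr h), abs_of_neg h]
  have hσ2 : σ ^ 2 = 1 := by
    rcases le_or_gt 0 y with h | h
    · simp [hσ, if_pos h]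
    · simp [hσ, if_neg (not_le.mpr h)]
  set t : ℝ := |y| / s with ht
  have ht0 : 0 ≤ t := div_nonneg (abs_nonneg y) hs0.le
  have ht1 : t ≤ 1 := (div_le_one hs0).mpr hy
  have h0s : (0 : Matrix (Fin 2) (Fin 2) ℝ).IsSymm := by simp [Matrix.IsSymm]
  have hξ1s : ((σ * s) • Matrix.vecMulVec v v).IsSymm := (isSymm_vmv v).smul _
  have hro : ∃ (α : ℝ) (η : Fin 2 → ℝ),
      (σ * s) • Matrix.vecMulVec v v - 0 = α • Matrix.vecMulVec η η :=
    ⟨σ * s, v, by simp⟩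
  have hcv := hg ((σ * s) • Matrix.vecMulVec v v) 0 hξ1s h0s hro t ⟨ht0, ht1⟩
  have hcomb : t • ((σ * s) • Matrix.vecMulVec v v) + (1 - t) • (0 : Matrix (Fin 2) (Fin 2) ℝ)
      = y • Matrix.vecMulVec v v := by
    rw [smul_zero, add_zero, smul_smul]
    congr 1
    rw [ht, mul_comm σ s, ← mul_assoc, div_mul_cancel₀ _ hs0.ne']
    linear_combination hσy
  rw [hcomb] at hcv
  have hg0 : g 0 ≤ 0 := by
    have := hgF 0 h0s
    simpa [Flam] using this
  have hg1 : g ((σ * s) • Matrix.vecMulVec v v) ≤ 2 * lam := by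
    have h1 := hgF _ hξ1s
    have h2 := Flam_le lam hlam ((σ * s) • Matrix.vecMulVec v v)
    have h3 : ∑ i, ∑ j, (((σ * s) • Matrix.vecMulVec v v) i j) ^ 2 = (σ * s) ^ 2 := by
      have := frob_comb u v hu hv huv 0 (σ * s)
      simpa using this
    have h4 : (σ * s) ^ 2 = lam := by
      rw [mul_pow, hσ2, one_mul, hs2]
    calc g _ ≤ _ := h1
      _ ≤ lam + (σ * s) ^ 2 := by rw [← h3]; exact h2
      _ = 2 * lam := by rw [h4]; ring
  calc g (y • Matrix.vecMulVec v v) ≤ t * g ((σ * s) • Matrix.vecMulVec v v) + (1 - t) * g 0 := hcv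
    _ ≤ t * (2 * lam) + (1 - t) * 0 :=
        add_le_add (mul_le_mul_of_nonneg_left hg1 ht0)
          (mul_le_mul_of_nonneg_left hg0 (by linarith))
    _ = 2 * s * |y| := by
        rw [mul_zero, add_zero, ht, div_mul_eq_mul_div, div_eq_iff hs0.ne']
        linear_combination (-2 * |y|) * hs2

lemma key_lam (a b : ℝ) (hab : |a| + |b| ≤ Real.sqrt lam) :
    g (a • Matrix.vecMulVec u u + b • Matrix.vecMulVec v v)
      ≤ 2 * Real.sqrt lam * (|a| + |b|) - 2 * (|a| * |b|) := by
  set s := Real.sqrt lam with hs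
  have hs0 : 0 < s := Real.sqrt_pos.mpr hlam
  have hs2 : s ^ 2 = lam := Real.sq_sqrt hlam.le
  have hB : |b| ≤ s := le_trans (by nlinarith [abs_nonneg a]) hab
  rcases eq_or_lt_of_le hB with hBs | hBs
  · -- |b| = s, so a = 0
    have ha0 : a = 0 := by
      have : |a| ≤ 0 := by linarith
      exact abs_eq_zero.mp (le_antisymm this (abs_nonneg a))
    have h2 := step2 hlam hg hgF hu hv huv b hB
    have e : a • Matrix.vecMulVec u u + b • Matrix.vecMulVec v v = b • Matrix.vecMulVec v v := by
      rw [ha0, zero_smul, zero_add]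
    rw [e, ha0, abs_zero]
    calc g (b • Matrix.vecMulVec v v) ≤ 2 * s * |b| := h2
      _ = 2 * s * (0 + |b|) - 2 * (0 * |b|) := by ring
  · -- |b| < s
    set σ : ℝ := if 0 ≤ a then 1 else -1 with hσ
    have hσa : σ * |a| = a := by
      rcases le_or_gt 0 a with h | h
      · simp [hσ, if_pos h, abs_of_nonneg h]
      · simp [hσ, if_neg (not_le.mpr h), abs_of_neg h]
    have hσ2 : σ ^ 2 = 1 := by
      rcases le_or_gt 0 a with h | h
      · simp [hσ, if_pos h]
      · simp [hσ, if_neg (not_le.mpr h)]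
    have hsB : 0 < s - |b| := by linarith
    set t : ℝ := |a| / (s - |b|) with ht
    have ht0 : 0 ≤ t := div_nonneg (abs_nonneg a) hsB.le
    have ht1 : t ≤ 1 := (div_le_one hsB).mpr (by linarith)
    set ξ₁ : Matrix (Fin 2) (Fin 2) ℝ :=
      (σ * (s - |b|)) • Matrix.vecMulVec u u + b • Matrix.vecMulVec v v with hξ₁
    set ξ₂ : Matrix (Fin 2) (Fin 2) ℝ := b • Matrix.vecMulVec v v with hξ₂
    have hξ₁s : ξ₁.IsSymm := ((isSymm_vmv u).smul _).add ((isSymm_vmv v).smul _)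
    have hξ₂s : ξ₂.IsSymm := (isSymm_vmv v).smul _
    have hro : ∃ (α : ℝ) (η : Fin 2 → ℝ), ξ₁ - ξ₂ = α • Matrix.vecMulVec η η :=
      ⟨σ * (s - |b|), u, by rw [hξ₁, hξ₂]; abel⟩
    have hcv := hg ξ₁ ξ₂ hξ₁s hξ₂s hro t ⟨ht0, ht1⟩
    have hta : t * (σ * (s - |b|)) = a := by
      rw [ht]; field_simp; linear_combination hσa
    have hcomb : t • ξ₁ + (1 - t) • ξ₂ = a • Matrix.vecMulVec u u + b • Matrix.vecMulVec v v := by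
      rw [hξ₁, hξ₂]
      ext i j
      simp only [Matrix.add_apply, Matrix.smul_apply, vecMulVec_apply, smul_eq_mul]
      linear_combination (u i * u j) * hta
    rw [hcomb] at hcv
    have hg1 : g ξ₁ ≤ lam + (s - |b|) ^ 2 + b ^ 2 := by
      have h1 := hgF ξ₁ hξ₁s
      have h2 := Flam_le lam hlam ξ₁
      have h3 : ∑ i, ∑ j, (ξ₁ i j) ^ 2 = (σ * (s - |b|)) ^ 2 + b ^ 2 :=
        frob_comb u v hu hv huv _ _
      have h4 : (σ * (s - |b|)) ^ 2 = (s - |b|) ^ 2 := by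
        rw [mul_pow, hσ2, one_mul]
      calc g ξ₁ ≤ _ := h1
        _ ≤ lam + ((σ * (s - |b|)) ^ 2 + b ^ 2) := by rw [← h3]; exact h2
        _ = lam + (s - |b|) ^ 2 + b ^ 2 := by rw [h4]; ring
    have hg2 : g ξ₂ ≤ 2 * s * |b| := step2 hlam hg hgF hu hv huv b hB
    have hb2 : b ^ 2 = |b| ^ 2 := (sq_abs b).symm
    calc g (a • Matrix.vecMulVec u u + b • Matrix.vecMulVec v v)
        ≤ t * g ξ₁ + (1 - t) * g ξ₂ := hcv
      _ ≤ t * (lam + (s - |b|) ^ 2 + b ^ 2) + (1 - t) * (2 * s * |b|) :=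
          add_le_add (mul_le_mul_of_nonneg_left hg1 ht0)
            (mul_le_mul_of_nonneg_left hg2 (by linarith))
      _ = 2 * s * (|a| + |b|) - 2 * (|a| * |b|) := by
          rw [ht, hb2]
          field_simp
          ring_nf
          nlinarith [hs2, hsB]

end key

lemma disc_eq (ξ : Matrix (Fin 2) (Fin 2) ℝ) (hξ : ξ.IsSymm) :
    ξ.trace ^ 2 - 4 * ξ.det = (ξ 0 0 - ξ 1 1) ^ 2 + 4 * (ξ 0 1) ^ 2 := by
  have h10 : ξ 1 0 = ξ 0 1 := hξ.apply 0 1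
  rw [Matrix.trace_fin_two, Matrix.det_fin_two, h10]
  ring

lemma disc_nonneg (ξ : Matrix (Fin 2) (Fin 2) ℝ) (hξ : ξ.IsSymm) :
    0 ≤ ξ.trace ^ 2 - 4 * ξ.det := by
  rw [disc_eq ξ hξ]; positivity

lemma eig_sum (ξ : Matrix (Fin 2) (Fin 2) ℝ) : eig1 ξ + eig2 ξ = ξ.trace := by
  unfold eig1 eig2; ring

lemma eig_mul (ξ : Matrix (Fin 2) (Fin 2) ℝ) (hξ : ξ.IsSymm) :
    eig1 ξ * eig2 ξ = ξ.det := by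
  unfold eig1 eig2
  have h := Real.sq_sqrt (disc_nonneg ξ hξ)
  nlinarith [h]

lemma spectral (ξ : Matrix (Fin 2) (Fin 2) ℝ) (hξ : ξ.IsSymm) :
    ∃ u v : Fin 2 → ℝ, (u 0 ^ 2 + u 1 ^ 2 = 1) ∧ (v 0 ^ 2 + v 1 ^ 2 = 1) ∧
      (u 0 * v 0 + u 1 * v 1 = 0) ∧
      ξ = eig1 ξ • Matrix.vecMulVec u u + eig2 ξ • Matrix.vecMulVec v v := by
  have h10 : ξ 1 0 = ξ 0 1 := hξ.apply 0 1
  set p := ξ 0 0 with hp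
  set q := ξ 0 1 with hq
  set r := ξ 1 1 with hr
  have htr : ξ.trace = p + r := Matrix.trace_fin_two ξ
  have hdet : ξ.det = p * r - q * q := by rw [Matrix.det_fin_two, h10]
  set D := Real.sqrt (ξ.trace ^ 2 - 4 * ξ.det) with hD
  have hD2 : D ^ 2 = (p - r) ^ 2 + 4 * q ^ 2 := by
    rw [hD, Real.sq_sqrt (disc_nonneg ξ hξ), disc_eq ξ hξ]
  have hDnn : 0 ≤ D := Real.sqrt_nonneg _
  have he1 : eig1 ξ = (p + r + D) / 2 := by rw [eig1, ← hD, htr]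
  have he2 : eig2 ξ = (p + r - D) / 2 := by rw [eig2, ← hD, htr]
  by_cases hq0 : q = 0
  · -- diagonal case
    rcases le_or_gt r p with hpr | hpr
    · have hDval : D = p - r := by
        rw [hD, disc_eq ξ hξ, ← hq, hq0]
        rw [show (p - r) ^ 2 + 4 * (0:ℝ) ^ 2 = (p - r) ^ 2 by ring, Real.sqrt_sq (by linarith)]
      refine ⟨![1, 0], ![0, 1], by norm_num, by norm_num, by norm_num, ?_⟩
      ext i j
      fin_cases i <;> fin_cases j <;>
        simp only [Matrix.add_apply, Matrix.smul_apply, vecMulVec_apply, smul_eq_mul, he1, he2,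
          Matrix.cons_val_zero, Matrix.cons_val_one, Matrix.head_cons, Fin.isValue,
          Fin.zero_eta, Fin.mk_one, ← hp, ← hq, ← hr, h10]
      · linear_combination (-1/2 : ℝ) * hDval
      · linear_combination hq0
      · linear_combination hq0
      · linear_combination (1/2 : ℝ) * hDval
    · have hDval : D = r - p := by
        rw [hD, disc_eq ξ hξ, ← hq, hq0]
        rw [show (p - r) ^ 2 + 4 * (0:ℝ) ^ 2 = (r - p) ^ 2 by ring, Real.sqrt_sq (by linarith)]
      refine ⟨![0, 1], ![1, 0], by norm_num, by norm_num, by norm_num, ?_⟩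
      ext i j
      fin_cases i <;> fin_cases j <;>
        simp only [Matrix.add_apply, Matrix.smul_apply, vecMulVec_apply, smul_eq_mul, he1, he2,
          Matrix.cons_val_zero, Matrix.cons_val_one, Matrix.head_cons, Fin.isValue,
          Fin.zero_eta, Fin.mk_one, ← hp, ← hq, ← hr, h10]
      · linear_combination (1/2 : ℝ) * hDval
      · linear_combination hq0
      · linear_combination hq0
      · linear_combination (-1/2 : ℝ) * hDval
  · -- q ≠ 0
    set n := (r - p + D) / 2 with hn
    set N := q ^ 2 + n ^ 2 with hN
    have hNpos : 0 < N := by positivity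
    set R := Real.sqrt N with hR
    have hRpos : 0 < R := Real.sqrt_pos.mpr hNpos
    have hRne : R ≠ 0 := hRpos.ne'
    have hR2 : R ^ 2 = N := Real.sq_sqrt hNpos.le
    have hE1 : D * n = N := by rw [hn, hN]; linear_combination hD2 / 4
    have hE2 : (p + r + D) / 2 * q ^ 2 + (p + r - D) / 2 * n ^ 2 = p * N := by
      rw [hn, hN]; linear_combination (-(r - p + D) / 8) * hD2
    have hE3 : (p + r + D) / 2 * n ^ 2 + (p + r - D) / 2 * q ^ 2 = r * N := by
      rw [hn, hN]; linear_combination ((r - p + D) / 8) * hD2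
    refine ⟨![q / R, n / R], ![-n / R, q / R], ?_, ?_, ?_, ?_⟩
    · simp only [Matrix.cons_val_zero, Matrix.cons_val_one, Matrix.head_cons]
      field_simp
      linear_combination -hR2
    · simp only [Matrix.cons_val_zero, Matrix.cons_val_one, Matrix.head_cons]
      field_simp
      linear_combination -hR2
    · simp only [Matrix.cons_val_zero, Matrix.cons_val_one, Matrix.head_cons]
      field_simp
      ring
    · ext i j
      fin_cases i <;> fin_cases j <;>
        simp only [Matrix.add_apply, Matrix.smul_apply, vecMulVec_apply, smul_eq_mul, he1, he2,
          Matrix.cons_val_zero, Matrix.cons_val_one, Matrix.head_cons, Fin.isValue,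
          Fin.zero_eta, Fin.mk_one, ← hp, ← hq, ← hr, h10] <;>
        field_simp
      · linear_combination 2 * p * hR2 + ((r - p + D) / 4) * hD2
      · linear_combination 2 * hR2 - 2 * hE1
      · linear_combination 2 * hR2 - 2 * hE1
      · linear_combination 2 * r * hR2 - ((r - p + D) / 4) * hD2
/-- For every λ > 0 and every symmetric 2×2 matrix ξ, R^sym F_λ(ξ) ≤ Ḡ_λ(ξ). -/
theorem RsymEnv_Flam_le_Gbar (lam : ℝ) (hlam : 0 < lam)
    (ξ : Matrix (Fin 2) (Fin 2) ℝ) (hξ : ξ.IsSymm) :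
    RsymEnv 2 (Flam lam) ξ ≤ Gbar lam ξ := by
  have hs0 : 0 < Real.sqrt lam := Real.sqrt_pos.mpr hlam
  have hdet : ξ.det = eig1 ξ * eig2 ξ := (eig_mul ξ hξ).symm
  have habs : |ξ.det| = |eig1 ξ| * |eig2 ξ| := by rw [hdet, abs_mul]
  have hGnn : 0 ≤ Gbar lam ξ := by
    unfold Gbar
    split
    · rename_i h
      rw [habs]
      unfold rho0 at h ⊢
      nlinarith [abs_nonneg (eig1 ξ), abs_nonneg (eig2 ξ), hs0]
    · have : (0:ℝ) ≤ ∑ i, ∑ j, (ξ i j) ^ 2 := by positivity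
      linarith
  apply Real.sSup_le _ hGnn
  rintro x ⟨g, hg, hgF, rfl⟩
  by_cases hcase : rho0 ξ ≤ Real.sqrt lam
  · obtain ⟨u, v, hu, hv, huv, hdecomp⟩ := spectral ξ hξ
    have hkey := key_lam hlam hg hgF hu hv huv (eig1 ξ) (eig2 ξ) hcase
    rw [← hdecomp] at hkey
    rw [Gbar, if_pos hcase, rho0, habs]
    linarith [hkey]
  · rw [Gbar, if_neg hcase]
    have hξ0 : ξ ≠ 0 := by
      intro h0
      apply hcase
      rw [h0]
      have : rho0 (0 : Matrix (Fin 2) (Fin 2) ℝ) = 0 := by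
        simp [rho0, eig1, eig2]
      rw [this]
      exact hs0.le
    have := hgF ξ hξ
    rw [Flam, if_neg hξ0] at this
    linarith
end
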